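/- Fix a prime p ≥ 5. Let f be a binary cubic form over ℤ_p that is nondegenerate modulo p, and let h ∈ M₂(ℤ_p) with det(h) ≠ 0 be such that f·h has coefficients in ℤ_p. Let val(h) be the largest integer n such that p^{−n}h ∈ M₂(ℤ_p), and let c = c(f·h) be the content valuation of f·h. Then val(h) = c if and only if the reduction modulo p of the primitive form p^{−c}·(f·h) is NOT of the form α·ℓ(x, y)³ for a unit α ∈ 𝔽_p^× and a nonzero linear form ℓ over 𝔽_p. -/

import Mathlib

set_option autoImplicit false

/-!
Write `h = p^v h'` with `h'` primitive and put `h'` in Smith form `u · diag(1, d) · w` with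
`u, w ∈ GL₂(ℤ_p)`. Substitutions by elements of `GL₂(ℤ_p)` change neither nondegeneracy nor
being a cube modulo `p`, and they turn `det(h) F(x, y) = f((x, y) h)` into
`p^c d E(x, y) = p^v g(x, d y)` up to units, where `g = f((x, y) w)` and `E = F₀((x, y) u⁻¹)`.
Since `g mod p` is not divisible by `y²`, its `x³` and `x²y` coefficients force `c ≤ v`.
If `c < v`, then `E ≡ E₀ x³` is a cube. If `c = v`, then either `d` is a unit and `E` is,
up to a unit, `g(x, d y)`, not a cube since `g mod p` is not; or `p ∣ d` and `E mod p` has a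
nonzero `x²y` but a zero `y³` coefficient.
-/

/-- The reduction map `ℤ_p → 𝔽̄_p`. -/
noncomputable def redBar (p : ℕ) [Fact p.Prime] (x : ℤ_[p]) : AlgebraicClosure (ZMod p) :=
  algebraMap (ZMod p) (AlgebraicClosure (ZMod p)) (PadicInt.toZMod x)

/-- The binary cubic form with coefficients `f 0, f 1, f 2, f 3 ∈ ℤ_p` is
nondegenerate modulo `p`: its reduction mod `p` is nonzero and has no repeated linear
factor over an algebraic closure of `𝔽_p` (it is not `(αx + βy)²(γx + δy)`). -/
def NondegPadic (p : ℕ) [Fact p.Prime] (f : Fin 4 → ℤ_[p]) : Prop :=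
  ¬(PadicInt.toZMod (f 0) = 0 ∧ PadicInt.toZMod (f 1) = 0 ∧ PadicInt.toZMod (f 2) = 0 ∧
      PadicInt.toZMod (f 3) = 0) ∧
    ¬∃ α β γ δ : AlgebraicClosure (ZMod p),
        redBar p (f 0) = α ^ 2 * γ ∧
        redBar p (f 1) = α ^ 2 * δ + 2 * α * β * γ ∧
        redBar p (f 2) = 2 * α * β * δ + β ^ 2 * γ ∧
        redBar p (f 3) = β ^ 2 * δ

/-- Evaluation of the binary cubic form with coefficient quadruple `q` over `ℚ_p`. -/
noncomputable def evalCubic (p : ℕ) [Fact p.Prime] (q : Fin 4 → ℚ_[p]) (x y : ℚ_[p]) : ℚ_[p] :=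
  q 0 * x ^ 3 + q 1 * x ^ 2 * y + q 2 * x * y ^ 2 + q 3 * y ^ 3

section

variable {R S : Type*} [CommRing R] [IsDomain R] [Semiring S] (φ : R →+* S)

theorem map_eq_zero_of_pow_mul_eq {π : R} (hπ : φ π = 0) (hπ₀ : π ≠ 0) {a b : R} {m n : ℕ}
    (hmn : m < n) (h : π ^ n * a = π ^ m * b) : φ b = 0 := by
  obtain ⟨k, rfl⟩ := Nat.exists_eq_add_of_lt hmn
  have hb : π ^ (k + 1) * a = b := mul_left_cancel₀ (pow_ne_zero m hπ₀) (by rw [← h]; ring)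
  simp [← hb, hπ]

end

namespace Matrix

variable {R : Type*} [CommRing R]

theorem exists_eq_mul_diagonal_mul_of_isUnit_apply_zero_zero {M : Matrix (Fin 2) (Fin 2) R}
    (hM : IsUnit (M 0 0)) : ∃ (u w : Matrix (Fin 2) (Fin 2) R) (d : R),
      IsUnit u.det ∧ IsUnit w.det ∧ M = u * diagonal ![1, d] * w := by
  obtain ⟨x, hx⟩ := hM.exists_right_inv
  refine ⟨!![M 0 0, 0; M 1 0, 1], !![1, x * M 0 1; 0, 1], x * M.det,
    by simpa [det_fin_two] using hM, by simp [det_fin_two], ?_⟩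
  rw [diagonal_fin_two, mul_fin_two, mul_fin_two, eta_fin_two M]
  ext i j
  fin_cases i <;> fin_cases j <;> simp [det_fin_two]
  · linear_combination (-M 0 1) * hx
  · linear_combination (-M 1 1) * hx

theorem exists_eq_mul_diagonal_mul {M : Matrix (Fin 2) (Fin 2) R}
    (hM : ∃ i j, IsUnit (M i j)) : ∃ (u w : Matrix (Fin 2) (Fin 2) R) (d : R),
      IsUnit u.det ∧ IsUnit w.det ∧ M = u * diagonal ![1, d] * w := by
  obtain ⟨i, j, hij⟩ := hM
  -- move the unit entry to position `(0, 0)` by swapping rows and/or columns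
  obtain ⟨a, b, ha, hb, haa, hbb, hab⟩ : ∃ a b : Matrix (Fin 2) (Fin 2) R,
      IsUnit a.det ∧ IsUnit b.det ∧ a * a = 1 ∧ b * b = 1 ∧ (a * M * b) 0 0 = M i j := by
    let S : Matrix (Fin 2) (Fin 2) R := !![0, 1; 1, 0]
    have hS : IsUnit S.det := by simp [S, det_fin_two]
    have hSS : S * S = 1 := by ext k l; fin_cases k <;> fin_cases l <;> simp [S]
    fin_cases i <;> fin_cases j
    · exact ⟨1, 1, by simp, by simp, one_mul 1, one_mul 1, by simp⟩
    · exact ⟨1, S, by simp, hS, one_mul 1, hSS, by simp [S, mul_apply]⟩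
    · exact ⟨S, 1, hS, by simp, hSS, one_mul 1, by simp [S, mul_apply, vecMul, dotProduct]⟩
    · exact ⟨S, S, hS, hS, hSS, hSS, by simp [S, mul_apply, vecMul, dotProduct]⟩
  obtain ⟨u, w, d, hu, hw, huw⟩ :=
    exists_eq_mul_diagonal_mul_of_isUnit_apply_zero_zero (hab ▸ hij)
  refine ⟨a * u, w * b, d, by simpa using ha.mul hu, by simpa using hw.mul hb, ?_⟩
  calc M = a * (a * M * b) * b := by
        rw [← mul_assoc, ← mul_assoc, haa, one_mul, mul_assoc, hbb, mul_one]
    _ = a * u * diagonal ![1, d] * (w * b) := by rw [huw]; simp only [mul_assoc]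

end Matrix

namespace BinaryCubic

open Matrix

section CommRing

variable {R : Type*} [CommRing R]

/-- The coefficients of `q((x, y) M)`. -/
def subst (q : Fin 4 → R) (M : Matrix (Fin 2) (Fin 2) R) : Fin 4 → R :=
  ![q 0 * M 0 0 ^ 3 + q 1 * M 0 0 ^ 2 * M 0 1 + q 2 * M 0 0 * M 0 1 ^ 2 + q 3 * M 0 1 ^ 3,
    3 * q 0 * M 0 0 ^ 2 * M 1 0 + q 1 * (M 0 0 ^ 2 * M 1 1 + 2 * M 0 0 * M 1 0 * M 0 1)
      + q 2 * (2 * M 0 0 * M 0 1 * M 1 1 + M 0 1 ^ 2 * M 1 0) + 3 * q 3 * M 0 1 ^ 2 * M 1 1,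
    3 * q 0 * M 0 0 * M 1 0 ^ 2 + q 1 * (2 * M 0 0 * M 1 0 * M 1 1 + M 0 1 * M 1 0 ^ 2)
      + q 2 * (M 0 0 * M 1 1 ^ 2 + 2 * M 0 1 * M 1 0 * M 1 1) + 3 * q 3 * M 0 1 * M 1 1 ^ 2,
    q 0 * M 1 0 ^ 3 + q 1 * M 1 0 ^ 2 * M 1 1 + q 2 * M 1 0 * M 1 1 ^ 2 + q 3 * M 1 1 ^ 3]

/-- The coefficients of `α (β x + γ y)³`. -/
def cube (α β γ : R) : Fin 4 → R :=
  ![α * β ^ 3, 3 * α * β ^ 2 * γ, 3 * α * β * γ ^ 2, α * γ ^ 3]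

/-- The coefficients of `(α x + β y)² (γ x + δ y)`. -/
def sqMul (α β γ δ : R) : Fin 4 → R :=
  ![α ^ 2 * γ, α ^ 2 * δ + 2 * α * β * γ, 2 * α * β * δ + β ^ 2 * γ, β ^ 2 * δ]

theorem subst_mul (q : Fin 4 → R) (M N : Matrix (Fin 2) (Fin 2) R) :
    subst q (M * N) = subst (subst q N) M := by
  ext i; fin_cases i <;> simp [subst, Matrix.mul_apply, Fin.sum_univ_two] <;> ring

theorem subst_subst_adjugate (q : Fin 4 → R) (M : Matrix (Fin 2) (Fin 2) R) :
    subst (subst q M) M.adjugate = M.det ^ 3 • q := by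
  ext i; fin_cases i <;> simp [subst, adjugate_fin_two, det_fin_two] <;> ring

@[simp]
theorem subst_zero (M : Matrix (Fin 2) (Fin 2) R) : subst 0 M = 0 := by
  ext i; fin_cases i <;> simp [subst]

theorem subst_smul (r : R) (q : Fin 4 → R) (M : Matrix (Fin 2) (Fin 2) R) :
    subst (r • q) M = r • subst q M := by
  ext i; fin_cases i <;> simp [subst] <;> ring

theorem subst_smul_matrix (q : Fin 4 → R) (s : R) (M : Matrix (Fin 2) (Fin 2) R) :
    subst q (s • M) = s ^ 3 • subst q M := by
  ext i; fin_cases i <;> simp [subst] <;> ring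

theorem subst_diagonal_apply (q : Fin 4 → R) (d : R) (i : Fin 4) :
    subst q (diagonal ![1, d]) i = d ^ (i : ℕ) * q i := by
  fin_cases i <;> simp [subst] <;> ring

theorem subst_cube (α β γ : R) (M : Matrix (Fin 2) (Fin 2) R) :
    subst (cube α β γ) M = cube α (β * M 0 0 + γ * M 0 1) (β * M 1 0 + γ * M 1 1) := by
  ext i; fin_cases i <;> simp [subst, cube] <;> ring

theorem subst_sqMul (α β γ δ : R) (M : Matrix (Fin 2) (Fin 2) R) :
    subst (sqMul α β γ δ) M = sqMul (α * M 0 0 + β * M 0 1) (α * M 1 0 + β * M 1 1)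
      (γ * M 0 0 + δ * M 0 1) (γ * M 1 0 + δ * M 1 1) := by
  ext i; fin_cases i <;> simp [subst, sqMul] <;> ring

theorem smul_cube (s α β γ : R) : s • cube α β γ = cube (s * α) β γ := by
  ext i; fin_cases i <;> simp [cube] <;> ring

theorem smul_sqMul (s α β γ δ : R) : s • sqMul α β γ δ = sqMul α β (s * γ) (s * δ) := by
  ext i; fin_cases i <;> simp [sqMul] <;> ring

theorem cube_eq_sqMul {μ α : R} (hμ : μ ^ 3 = α) (β γ : R) :
    cube α β γ = sqMul (μ * β) (μ * γ) (μ * β) (μ * γ) := by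
  subst hμ; ext i; fin_cases i <;> simp [cube, sqMul] <;> ring

theorem comp_smul {S : Type*} [CommRing S] (φ : R →+* S) (s : R) (q : Fin 4 → R) :
    φ ∘ (s • q) = φ s • (φ ∘ q) := by
  ext i; simp

theorem comp_subst {S : Type*} [CommRing S] (φ : R →+* S) (q : Fin 4 → R)
    (M : Matrix (Fin 2) (Fin 2) R) : φ ∘ subst q M = subst (φ ∘ q) (φ.mapMatrix M) := by
  ext i; fin_cases i <;> simp [subst, map_ofNat]

theorem comp_cube {S : Type*} [CommRing S] (φ : R →+* S) (α β γ : R) :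
    φ ∘ cube α β γ = cube (φ α) (φ β) (φ γ) := by
  ext i; fin_cases i <;> simp [cube, map_ofNat]

theorem smul_eq_subst_diagonal_of_det_smul_eq_subst [IsDomain R] {π d : R} (hπ : π ≠ 0)
    {u w : Matrix (Fin 2) (Fin 2) R} (hu : u.det ≠ 0) {f F : Fin 4 → R} {c v : ℕ}
    (h : (π ^ v • (u * diagonal ![1, d] * w)).det • π ^ c • F
      = subst f (π ^ v • (u * diagonal ![1, d] * w))) :
    π ^ c • d • (w.det • subst F u.adjugate)
      = π ^ v • subst (u.det ^ 2 • subst f w) (diagonal ![1, d]) := by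
  have h' := congrArg (subst · u.adjugate) h
  simp only [det_smul, det_mul, det_diagonal, subst_smul_matrix, subst_mul, subst_smul,
    subst_subst_adjugate] at h'
  rw [subst_smul]
  ext i
  have hi := congrFun h' i
  simp only [Pi.smul_apply, smul_eq_mul, Fin.prod_univ_two, Fintype.card_fin, cons_val_zero,
    cons_val_one] at hi ⊢
  refine mul_left_cancel₀ (mul_ne_zero (pow_ne_zero (2 * v) hπ) hu) ?_
  linear_combination hi

end CommRing

section Field

variable {K : Type*} [Field K]

def IsCube (q : Fin 4 → K) : Prop :=
  ∃ α β γ : K, α ≠ 0 ∧ ¬(β = 0 ∧ γ = 0) ∧ q = cube α β γ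

theorem isCube_iff {q : Fin 4 → K} : IsCube q ↔ ∃ α β γ : K, α ≠ 0 ∧ ¬(β = 0 ∧ γ = 0) ∧
    q 0 = α * β ^ 3 ∧ q 1 = 3 * α * β ^ 2 * γ ∧ q 2 = 3 * α * β * γ ^ 2 ∧ q 3 = α * γ ^ 3 := by
  simp [IsCube, funext_iff, Fin.forall_fin_succ, cube]

def HasSquareFactor (q : Fin 4 → K) : Prop :=
  ∃ α β γ δ : K, q = sqMul α β γ δ

theorem smul_subst_iff {P : (Fin 4 → K) → Prop}
    (hsmul : ∀ {s : K} {q : Fin 4 → K}, s ≠ 0 → P q → P (s • q))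
    (hsubst : ∀ {M : Matrix (Fin 2) (Fin 2) K} {q : Fin 4 → K},
      M.det ≠ 0 → P q → P (subst q M))
    {s : K} {M : Matrix (Fin 2) (Fin 2) K} {q : Fin 4 → K} (hs : s ≠ 0) (hM : M.det ≠ 0) :
    P (s • subst q M) ↔ P q := by
  refine ⟨fun h => ?_, fun h => hsmul hs (hsubst hM h)⟩
  have hsM : s * M.det ^ 3 ≠ 0 := mul_ne_zero hs (pow_ne_zero 3 hM)
  have hadj : M.adjugate.det ≠ 0 := by simpa [det_adjugate] using hM
  have := hsmul (inv_ne_zero hsM) (hsubst hadj h)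
  rwa [subst_smul, subst_subst_adjugate, smul_smul, smul_smul, mul_assoc, inv_mul_cancel₀ hsM,
    one_smul] at this

theorem smul_subst_ne_zero_iff {s : K} {M : Matrix (Fin 2) (Fin 2) K} {q : Fin 4 → K}
    (hs : s ≠ 0) (hM : M.det ≠ 0) : s • subst q M ≠ 0 ↔ q ≠ 0 := by
  refine smul_subst_iff (P := (· ≠ 0)) (fun hs hq => smul_ne_zero hs hq)
    (fun {M q} hM hq hMq => hq ?_) hs hM
  have h := subst_subst_adjugate q M
  rw [hMq, subst_zero] at h
  exact (smul_eq_zero.mp h.symm).resolve_left (pow_ne_zero 3 hM)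

theorem IsCube.smul {s : K} {q : Fin 4 → K} (hs : s ≠ 0) (hq : IsCube q) : IsCube (s • q) := by
  obtain ⟨α, β, γ, hα, hβγ, rfl⟩ := hq
  exact ⟨s * α, β, γ, mul_ne_zero hs hα, hβγ, smul_cube s α β γ⟩

theorem IsCube.subst {M : Matrix (Fin 2) (Fin 2) K} {q : Fin 4 → K} (hM : M.det ≠ 0)
    (hq : IsCube q) : IsCube (subst q M) := by
  obtain ⟨α, β, γ, hα, hβγ, rfl⟩ := hq
  refine ⟨α, _, _, hα, fun ⟨h₀, h₁⟩ => hβγ ⟨?_, ?_⟩, subst_cube α β γ M⟩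
  · refine (mul_eq_zero.mp (?_ : β * M.det = 0)).resolve_right hM
    rw [det_fin_two]; linear_combination M 1 1 * h₀ - M 0 1 * h₁
  · refine (mul_eq_zero.mp (?_ : γ * M.det = 0)).resolve_right hM
    rw [det_fin_two]; linear_combination M 0 0 * h₁ - M 1 0 * h₀

theorem isCube_smul_subst_iff {s : K} {M : Matrix (Fin 2) (Fin 2) K} {q : Fin 4 → K}
    (hs : s ≠ 0) (hM : M.det ≠ 0) : IsCube (s • subst q M) ↔ IsCube q :=
  smul_subst_iff (fun hs hq => hq.smul hs) (fun hM hq => hq.subst hM) hs hM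

theorem HasSquareFactor.smul (s : K) {q : Fin 4 → K} (hq : HasSquareFactor q) :
    HasSquareFactor (s • q) := by
  obtain ⟨α, β, γ, δ, rfl⟩ := hq
  exact ⟨α, β, s * γ, s * δ, smul_sqMul s α β γ δ⟩

theorem HasSquareFactor.subst (M : Matrix (Fin 2) (Fin 2) K) {q : Fin 4 → K}
    (hq : HasSquareFactor q) : HasSquareFactor (subst q M) := by
  obtain ⟨α, β, γ, δ, rfl⟩ := hq
  exact ⟨_, _, _, _, subst_sqMul α β γ δ M⟩

theorem hasSquareFactor_smul_subst_iff {s : K} {M : Matrix (Fin 2) (Fin 2) K} {q : Fin 4 → K}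
    (hs : s ≠ 0) (hM : M.det ≠ 0) : HasSquareFactor (s • subst q M) ↔ HasSquareFactor q :=
  smul_subst_iff (fun _ hq => hq.smul _) (fun _ hq => hq.subst _) hs hM

theorem hasSquareFactor_of_coeff_zero {q : Fin 4 → K} (h₀ : q 0 = 0) (h₁ : q 1 = 0) :
    HasSquareFactor q :=
  ⟨0, 1, q 2, q 3, by ext i; fin_cases i <;> simp [sqMul, h₀, h₁]⟩

theorem IsCube.hasSquareFactor_comp {L : Type*} [Field L] [IsAlgClosed L] (χ : K →+* L)
    {q : Fin 4 → K} (hq : IsCube q) : HasSquareFactor (χ ∘ q) := by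
  obtain ⟨α, β, γ, -, -, rfl⟩ := hq
  obtain ⟨μ, hμ⟩ := IsAlgClosed.exists_pow_nat_eq (χ α) three_pos
  exact ⟨_, _, _, _, (comp_cube χ α β γ).trans (cube_eq_sqMul hμ _ _)⟩

theorem coeff_ne_zero_and_not_isCube_of_not_hasSquareFactor_comp {L : Type*} [Field L]
    [IsAlgClosed L] (χ : K →+* L) {q : Fin 4 → K} (h : ¬HasSquareFactor (χ ∘ q)) :
    ¬(q 0 = 0 ∧ q 1 = 0) ∧ ¬IsCube q :=
  ⟨fun ⟨h₀, h₁⟩ => h (hasSquareFactor_of_coeff_zero (by simp [h₀]) (by simp [h₁])),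
    fun hq => h (hq.hasSquareFactor_comp χ)⟩

theorem isCube_of_coeff_succ_eq_zero {q : Fin 4 → K} (h₀ : q 0 ≠ 0)
    (h : ∀ i : Fin 3, q i.succ = 0) : IsCube q :=
  ⟨q 0, 1, 0, h₀, by simp, by
    ext i; fin_cases i <;> simp [cube]; exacts [h 0, h 1, h 2]⟩

theorem not_isCube_of_coeff {q : Fin 4 → K} (h₁ : q 1 ≠ 0) (h₃ : q 3 = 0) : ¬IsCube q := by
  rintro ⟨α, β, γ, hα, -, rfl⟩
  simp [cube] at h₁ h₃
  tauto

end Field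

section Domain

variable {R K : Type*} [CommRing R] [IsDomain R] [Field K] (φ : R →+* K)

theorem not_isCube_comp_of_smul_eq_subst_diagonal {d : R} (hd : d ≠ 0) {g E : Fin 4 → R}
    (h : d • E = subst g (diagonal ![1, d])) (hg₀₁ : ¬(φ (g 0) = 0 ∧ φ (g 1) = 0))
    (hg : ¬IsCube (φ ∘ g)) : ¬IsCube (φ ∘ E) := by
  by_cases hφd : φ d = 0
  · have hcoeff (i : Fin 4) : d * E i = d ^ (i : ℕ) * g i := by
      simpa [subst_diagonal_apply] using congrFun h i
    have hg₀ : φ (g 0) = 0 := by simpa [hφd, eq_comm] using congrArg φ (hcoeff 0)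
    have hE₁ : E 1 = g 1 := mul_left_cancel₀ hd (by simpa using hcoeff 1)
    have hE₃ : E 3 = d ^ 2 * g 3 := mul_left_cancel₀ hd <| by
      linear_combination (by simpa using hcoeff 3 : d * E 3 = d ^ 3 * g 3)
    refine not_isCube_of_coeff ?_ (by simp [hE₃, hφd])
    simpa [hE₁] using fun hg₁ => hg₀₁ ⟨hg₀, hg₁⟩
  · have hφE : φ ∘ E = (φ d)⁻¹ • subst (φ ∘ g) (φ.mapMatrix (diagonal ![1, d])) := by
      rw [← comp_subst, ← h, comp_smul, inv_smul_smul₀ hφd]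
    have hdet : (φ.mapMatrix (diagonal ![1, d])).det ≠ 0 := by
      simpa [← RingHom.map_det] using hφd
    rwa [hφE, isCube_smul_subst_iff (inv_ne_zero hφd) hdet]

theorem eq_iff_not_isCube_comp_of_smul_eq_subst_diagonal {π : R} (hπ : φ π = 0)
    (hπ₀ : π ≠ 0) {d : R} (hd : d ≠ 0) {g E : Fin 4 → R} {c v : ℕ}
    (h : π ^ c • d • E = π ^ v • subst g (diagonal ![1, d])) (hE : φ ∘ E ≠ 0)
    (hg₀₁ : ¬(φ (g 0) = 0 ∧ φ (g 1) = 0)) (hg : ¬IsCube (φ ∘ g)) :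
    v = c ↔ ¬IsCube (φ ∘ E) := by
  have hcoeff (i : Fin 4) : π ^ c * (d * E i) = π ^ v * (d ^ (i : ℕ) * g i) := by
    simpa [subst_diagonal_apply] using congrFun h i
  have hcoeff_succ (i : Fin 3) : π ^ c * E i.succ = π ^ v * (d ^ (i : ℕ) * g i.succ) := by
    refine mul_left_cancel₀ hd ?_
    have := hcoeff i.succ
    rw [Fin.val_succ, pow_succ] at this
    linear_combination this
  rcases lt_trichotomy v c with hvc | rfl | hcv
  · refine absurd ⟨?_, ?_⟩ hg₀₁
    · simpa using map_eq_zero_of_pow_mul_eq φ hπ hπ₀ hvc (hcoeff 0)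
    · simpa using map_eq_zero_of_pow_mul_eq φ hπ hπ₀ hvc (hcoeff_succ 0)
  · exact iff_of_true rfl <| not_isCube_comp_of_smul_eq_subst_diagonal φ hd
      (smul_right_injective _ (pow_ne_zero v hπ₀) h) hg₀₁ hg
  · have hE_succ (i : Fin 3) : φ (E i.succ) = 0 :=
      map_eq_zero_of_pow_mul_eq φ hπ hπ₀ hcv (hcoeff_succ i).symm
    have hE₀ : φ (E 0) ≠ 0 := fun hE₀ => hE (funext (Fin.cases hE₀ hE_succ))
    exact iff_of_false hcv.ne' (not_not_intro (isCube_of_coeff_succ_eq_zero hE₀ hE_succ))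

end Domain

end BinaryCubic

open BinaryCubic Matrix

namespace PadicInt

variable {p : ℕ} [Fact p.Prime]

theorem toZMod_eq_zero_iff_dvd {x : ℤ_[p]} : toZMod x = 0 ↔ (p : ℤ_[p]) ∣ x := by
  rw [← RingHom.mem_ker, ker_toZMod, maximalIdeal_eq_span_p, Ideal.mem_span_singleton]

theorem exists_eq_pow_smul_isUnit {ι κ : Type*} {M : Matrix ι κ ℤ_[p]} {v : ℕ}
    (hv : (∀ i j, (p : ℤ_[p]) ^ v ∣ M i j) ∧ ¬∀ i j, (p : ℤ_[p]) ^ (v + 1) ∣ M i j) :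
    ∃ M' : Matrix ι κ ℤ_[p], M = (p : ℤ_[p]) ^ v • M' ∧ ∃ i j, IsUnit (M' i j) := by
  choose M' hM' using hv.1
  refine ⟨M', funext₂ hM', ?_⟩
  by_contra! hM
  refine hv.2 fun i j => ?_
  rw [hM' i j, pow_succ]
  exact mul_dvd_mul_left _ ((norm_lt_one_iff_dvd _).mp (not_isUnit_iff.mp (hM i j)))

theorem comp_toZMod_ne_zero {ι : Type*} {x : ι → ℤ_[p]} {n : ℕ}
    (hx : ¬∀ i, (p : ℤ_[p]) ^ (n + 1) ∣ ((p : ℤ_[p]) ^ n • x) i) : toZMod ∘ x ≠ 0 := by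
  contrapose! hx
  intro i
  rw [pow_succ, Pi.smul_apply, smul_eq_mul]
  exact mul_dvd_mul_left _ (toZMod_eq_zero_iff_dvd.mp (congrFun hx i))

end PadicInt

section EvalCubic

variable {p : ℕ} [Fact p.Prime]

theorem evalCubic_smul (s : ℚ_[p]) (q : Fin 4 → ℚ_[p]) (x y : ℚ_[p]) :
    evalCubic p (s • q) x y = s * evalCubic p q x y := by
  simp [evalCubic]; ring

theorem evalCubic_subst (q : Fin 4 → ℚ_[p]) (M : Matrix (Fin 2) (Fin 2) ℚ_[p]) (x y : ℚ_[p]) :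
    evalCubic p (subst q M) x y
      = evalCubic p q (x * M 0 0 + y * M 1 0) (x * M 0 1 + y * M 1 1) := by
  simp [evalCubic, subst]; ring

theorem eq_of_evalCubic_eq {q r : Fin 4 → ℚ_[p]}
    (h : ∀ x y, evalCubic p q x y = evalCubic p r x y) : q = r := by
  have h₁₀ := h 1 0
  have h₀₁ := h 0 1
  have h₁₁ := h 1 1
  have hneg := h 1 (-1)
  simp only [evalCubic] at h₁₀ h₀₁ h₁₁ hneg
  have e₀ : q 0 = r 0 := by linear_combination h₁₀
  have e₁ : q 1 = r 1 := by linear_combination h₁₁ / 2 - hneg / 2 - h₀₁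
  have e₂ : q 2 = r 2 := by linear_combination h₁₁ / 2 + hneg / 2 - h₁₀
  have e₃ : q 3 = r 3 := by linear_combination h₀₁
  ext i; fin_cases i <;> assumption

theorem det_smul_eq_subst_of_evalCubic_eq {f F : Fin 4 → ℤ_[p]}
    {h : Matrix (Fin 2) (Fin 2) ℤ_[p]} (hdet : h.det ≠ 0)
    (hF : ∀ x y : ℚ_[p], evalCubic p (fun i => (F i : ℚ_[p])) x y
      = (h.det : ℚ_[p])⁻¹ * evalCubic p (fun i => (f i : ℚ_[p]))
          (x * h 0 0 + y * h 1 0) (x * h 0 1 + y * h 1 1)) :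
    h.det • F = subst f h := by
  let ι : ℤ_[p] →+* ℚ_[p] := PadicInt.Coe.ringHom
  have hι : ι ∘ (h.det • F) = ι ∘ subst f h := eq_of_evalCubic_eq fun x y => by
    rw [comp_smul, comp_subst, evalCubic_smul, evalCubic_subst]
    exact (hF x y).symm ▸ mul_inv_cancel_left₀ (PadicInt.coe_ne_zero.mpr hdet) _
  exact Subtype.coe_injective.comp_left hι

end EvalCubic

theorem NondegPadic.not_hasSquareFactor_smul_subst {p : ℕ} [Fact p.Prime]
    {f : Fin 4 → ℤ_[p]} (hf : NondegPadic p f) {s : ℤ_[p]} (hs : IsUnit s)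
    {w : Matrix (Fin 2) (Fin 2) ℤ_[p]} (hw : IsUnit w.det) : ¬HasSquareFactor (redBar p ∘ (s • subst f w)) := by
  let ψ := (algebraMap (ZMod p) (AlgebraicClosure (ZMod p))).comp PadicInt.toZMod
  change ¬HasSquareFactor (ψ ∘ _)
  rw [comp_smul, comp_subst, hasSquareFactor_smul_subst_iff (hs.map ψ).ne_zero
    (by rw [← RingHom.map_det]; exact (hw.map ψ).ne_zero)]
  rintro ⟨α, β, γ, δ, h⟩
  simp [funext_iff, Fin.forall_fin_succ, sqMul] at h
  exact hf.2 ⟨α, β, γ, δ, h⟩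

theorem val_eq_content_iff_not_cube_general (p : ℕ) [Fact p.Prime]
    (f : Fin 4 → ℤ_[p]) (hf : NondegPadic p f)
    (h : Matrix (Fin 2) (Fin 2) ℤ_[p]) (hdet : h.det ≠ 0)
    (F : Fin 4 → ℤ_[p])
    (hF : ∀ x y : ℚ_[p],
      evalCubic p (fun i => (F i : ℚ_[p])) x y
        = ((h.det : ℚ_[p]))⁻¹ *
            evalCubic p (fun i => (f i : ℚ_[p]))
              (x * (h 0 0 : ℚ_[p]) + y * (h 1 0 : ℚ_[p]))
              (x * (h 0 1 : ℚ_[p]) + y * (h 1 1 : ℚ_[p])))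
    (v : ℕ)
    (hv : (∀ i j, (p : ℤ_[p]) ^ v ∣ h i j) ∧ ¬∀ i j, (p : ℤ_[p]) ^ (v + 1) ∣ h i j)
    (c : ℕ)
    (hc : (∀ i, (p : ℤ_[p]) ^ c ∣ F i) ∧ ¬∀ i, (p : ℤ_[p]) ^ (c + 1) ∣ F i)
    (F0 : Fin 4 → ℤ_[p]) (hF0 : ∀ i, F i = (p : ℤ_[p]) ^ c * F0 i) :
    v = c ↔
      ¬∃ α β γ : ZMod p, α ≠ 0 ∧ ¬(β = 0 ∧ γ = 0) ∧
        PadicInt.toZMod (F0 0) = α * β ^ 3 ∧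
        PadicInt.toZMod (F0 1) = 3 * α * β ^ 2 * γ ∧
        PadicInt.toZMod (F0 2) = 3 * α * β * γ ^ 2 ∧
        PadicInt.toZMod (F0 3) = α * γ ^ 3 := by
  let φ : ℤ_[p] →+* ZMod p := PadicInt.toZMod
  have hFh := det_smul_eq_subst_of_evalCubic_eq hdet hF
  obtain ⟨h', rfl, hh'⟩ := PadicInt.exists_eq_pow_smul_isUnit hv
  obtain ⟨u, w, d, hu, hw, rfl⟩ := exists_eq_mul_diagonal_mul hh'
  obtain rfl : F = (p : ℤ_[p]) ^ c • F0 := funext hF0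
  have hp : (p : ℤ_[p]) ≠ 0 := PadicInt.prime_p.ne_zero
  have hd : d ≠ 0 := by rintro rfl; simp at hdet
  have hφu : (φ.mapMatrix u.adjugate).det ≠ 0 := by
    rw [← RingHom.map_det, det_adjugate]
    exact ((hu.pow _).map φ).ne_zero
  have hE : φ ∘ (w.det • subst F0 u.adjugate) ≠ 0 := by
    rw [comp_smul, comp_subst, smul_subst_ne_zero_iff (hw.map φ).ne_zero hφu]
    exact PadicInt.comp_toZMod_ne_zero hc.2
  obtain ⟨hg₀₁, hg⟩ := coeff_ne_zero_and_not_isCube_of_not_hasSquareFactor_comp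
    (algebraMap (ZMod p) (AlgebraicClosure (ZMod p)))
    (hf.not_hasSquareFactor_smul_subst (hu.pow 2) hw)
  rw [eq_iff_not_isCube_comp_of_smul_eq_subst_diagonal φ (by simp [φ]) hp hd
    (smul_eq_subst_diagonal_of_det_smul_eq_subst hp hu.ne_zero hFh) hE hg₀₁ hg,
    comp_smul, comp_subst, isCube_smul_subst_iff (hw.map φ).ne_zero hφu, isCube_iff]
  rfl

/-- Fix a prime `p ≥ 5`.  Let `f` be a binary cubic form over `ℤ_p` nondegenerate
modulo `p`, let `h ∈ M₂(ℤ_p)` with `det h ≠ 0` and suppose `F = f·h` (where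
`(f·h)(x,y) = det(h)⁻¹ f((x,y)h)`) has coefficients in `ℤ_p`.  Let `v = val(h)` be the
largest integer with `p^{−v}h ∈ M₂(ℤ_p)`, let `c = c(F)` be the content valuation of
`F`, and write `F = p^c F₀`.  Then `v = c` if and only if the reduction of `F₀`
modulo `p` is NOT of the form `α·ℓ(x,y)³` with `α ∈ 𝔽_p^×` and `ℓ` a nonzero linear
form over `𝔽_p`. -/
theorem val_eq_content_iff_not_cube (p : ℕ) [Fact p.Prime] (hp5 : 5 ≤ p)
    (f : Fin 4 → ℤ_[p]) (hf : NondegPadic p f)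
    (h : Matrix (Fin 2) (Fin 2) ℤ_[p]) (hdet : h.det ≠ 0)
    (F : Fin 4 → ℤ_[p])
    (hF : ∀ x y : ℚ_[p],
      evalCubic p (fun i => (F i : ℚ_[p])) x y
        = ((h.det : ℚ_[p]))⁻¹ *
            evalCubic p (fun i => (f i : ℚ_[p]))
              (x * (h 0 0 : ℚ_[p]) + y * (h 1 0 : ℚ_[p]))
              (x * (h 0 1 : ℚ_[p]) + y * (h 1 1 : ℚ_[p])))
    (v : ℕ)
    (hv : (∀ i j, (p : ℤ_[p]) ^ v ∣ h i j) ∧ ¬∀ i j, (p : ℤ_[p]) ^ (v + 1) ∣ h i j)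
    (c : ℕ)
    (hc : (∀ i, (p : ℤ_[p]) ^ c ∣ F i) ∧ ¬∀ i, (p : ℤ_[p]) ^ (c + 1) ∣ F i)
    (F0 : Fin 4 → ℤ_[p]) (hF0 : ∀ i, F i = (p : ℤ_[p]) ^ c * F0 i) :
    v = c ↔
      ¬∃ α β γ : ZMod p, α ≠ 0 ∧ ¬(β = 0 ∧ γ = 0) ∧
        PadicInt.toZMod (F0 0) = α * β ^ 3 ∧
        PadicInt.toZMod (F0 1) = 3 * α * β ^ 2 * γ ∧
        PadicInt.toZMod (F0 2) = 3 * α * β * γ ^ 2 ∧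
        PadicInt.toZMod (F0 3) = α * γ ^ 3 :=
  val_eq_content_iff_not_cube_general p f hf h hdet F hF v hv c hc F0 hF0
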